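/- arXiv:0808.2169 — 6 statements merged into one kernel-verified Lean document; each statement's English description precedes it below -/
import Mathlib

section
/- Let A and B be two finite multisets of complex numbers, all of whose elements lie on the circle |z| = M for some M > 0. If there exists λ with 0 < λ < M and a constant C such that |Σ_{β ∈ B} β^s − Σ_{α ∈ A} α^s| ≤ C · λ^s for every sufficiently large integer s, then A = B (as multisets). -/
/-!
Dividing by `M` puts all points on the unit circle and turns the hypothesis into
`p_B s - p_A s → 0` for the power sums `p_S s = ∑_{w ∈ S} w ^ s`. For `‖w‖ ≤ 1` the Cesàro means
of `w ^ s` tend to `1` if `w = 1` and to `0` otherwise, since the geometric sums `∑_{i<n} w ^ i`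
stay bounded; hence the Cesàro means of `p_S` tend to the multiplicity of `1` in `S`. Those of
`p_B - p_A` tend to `0`, so `1` has the same multiplicity in `A` and in `B`, and rotating by `z⁻¹`
gives the same for every `z` on the unit circle.
-/

open Filter Topology Finset

namespace Multiset

variable {R : Type*}

def powerSum [CommSemiring R] (S : Multiset R) (s : ℕ) : R := (S.map (· ^ s)).sum

@[simp]
lemma powerSum_cons [CommSemiring R] (a : R) (S : Multiset R) (s : ℕ) :
    (a ::ₘ S).powerSum s = a ^ s + S.powerSum s := by
  simp [powerSum]

lemma powerSum_map_mul [CommSemiring R] (S : Multiset R) (u : R) (s : ℕ) :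
    (S.map (· * u)).powerSum s = S.powerSum s * u ^ s := by
  simp only [powerSum, map_map, Function.comp_def, mul_pow, sum_map_mul_right]

end Multiset

section Cesaro

variable {𝕜 : Type*}

lemma norm_geom_sum_le_of_norm_le_one [NormedDivisionRing 𝕜] {w : 𝕜} (hw : ‖w‖ ≤ 1)
    (hw1 : w ≠ 1) (n : ℕ) : ‖∑ i ∈ range n, w ^ i‖ ≤ 2 / ‖w - 1‖ := by
  rw [geom_sum_eq hw1, norm_div]
  gcongr
  calc ‖w ^ n - 1‖ ≤ ‖w ^ n‖ + ‖(1 : 𝕜)‖ := norm_sub_le _ _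
    _ ≤ 1 + 1 := by gcongr <;> simp [norm_pow, pow_le_one₀ (norm_nonneg w) hw]
    _ = 2 := by norm_num

variable [RCLike 𝕜]

lemma tendsto_cesaro_pow_of_norm_le_one {w : 𝕜} (hw : ‖w‖ ≤ 1) :
    Tendsto (fun n : ℕ => (n⁻¹ : ℝ) • ∑ i ∈ range n, w ^ i) atTop
      (𝓝 (if w = 1 then 1 else 0)) := by
  split_ifs with hw1
  · subst hw1
    refine tendsto_const_nhds.congr' ?_
    filter_upwards [eventually_ne_atTop 0] with n hn
    simp [RCLike.real_smul_eq_coe_mul, hn]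
  · have hlim : Tendsto (fun n : ℕ => (n : ℝ)⁻¹ * (2 / ‖w - 1‖)) atTop (𝓝 0) := by
      simpa using (tendsto_inv_atTop_nhds_zero_nat (𝕜 := ℝ)).mul_const (2 / ‖w - 1‖)
    refine squeeze_zero_norm (fun n => ?_) hlim
    rw [norm_smul, Real.norm_of_nonneg (by positivity)]
    exact mul_le_mul_of_nonneg_left (norm_geom_sum_le_of_norm_le_one hw hw1 n) (by positivity)

lemma Multiset.tendsto_cesaro_powerSum [DecidableEq 𝕜] {S : Multiset 𝕜} (hS : ∀ w ∈ S, ‖w‖ ≤ 1) :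
    Tendsto (fun n : ℕ => (n⁻¹ : ℝ) • ∑ i ∈ Finset.range n, S.powerSum i) atTop
      (𝓝 (S.count 1)) := by
  induction S using Multiset.induction_on with
  | empty => simp [powerSum]
  | cons a S ih =>
    simp only [powerSum_cons, sum_add_distrib, smul_add, count_cons]
    have ha := tendsto_cesaro_pow_of_norm_le_one (hS a (mem_cons_self a S))
    have hrest := ih fun w hw => hS w (mem_cons_of_mem hw)
    convert ha.add hrest using 2
    by_cases ha1 : a = 1
    · simp [ha1, add_comm]
    · simp [ha1, Ne.symm ha1]

end Cesaro

section Rigidity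

variable {𝕜 : Type*} [RCLike 𝕜]

lemma Multiset.count_one_eq_of_tendsto_powerSum_sub [DecidableEq 𝕜] {A B : Multiset 𝕜}
    (hA : ∀ w ∈ A, ‖w‖ ≤ 1) (hB : ∀ w ∈ B, ‖w‖ ≤ 1)
    (h : Tendsto (fun s => B.powerSum s - A.powerSum s) atTop (𝓝 0)) :
    A.count 1 = B.count 1 := by
  have hzero := h.cesaro_smul
  have hcount := (tendsto_cesaro_powerSum hB).sub (tendsto_cesaro_powerSum hA)
  simp only [sum_sub_distrib, smul_sub] at hzero
  exact_mod_cast (sub_eq_zero.1 (tendsto_nhds_unique hcount hzero)).symm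

lemma Multiset.eq_of_tendsto_powerSum_sub {A B : Multiset 𝕜}
    (hA : ∀ w ∈ A, ‖w‖ = 1) (hB : ∀ w ∈ B, ‖w‖ = 1)
    (h : Tendsto (fun s => B.powerSum s - A.powerSum s) atTop (𝓝 0)) :
    A = B := by
  classical
  ext z
  by_cases hz : ‖z‖ = 1
  · have hz0 : z ≠ 0 := norm_ne_zero_iff.1 (hz ▸ one_ne_zero)
    have hinj : Function.Injective (· * z⁻¹) := mul_left_injective₀ (inv_ne_zero hz0)
    have hrot : ∀ S : Multiset 𝕜, (∀ w ∈ S, ‖w‖ = 1) → ∀ w ∈ S.map (· * z⁻¹), ‖w‖ ≤ 1 := by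
      intro S hS w hw
      obtain ⟨v, hv, rfl⟩ := mem_map.1 hw
      simp [hS v hv, hz]
    have key := count_one_eq_of_tendsto_powerSum_sub (hrot A hA) (hrot B hB) (by
      simp only [powerSum_map_mul, ← sub_mul]
      rw [tendsto_zero_iff_norm_tendsto_zero]
      simpa [hz] using h.norm)
    rwa [← mul_inv_cancel₀ hz0, count_map_eq_count' _ _ hinj,
      count_map_eq_count' _ _ hinj] at key
  · rw [count_eq_zero.2 fun h => hz (hA _ h), count_eq_zero.2 fun h => hz (hB _ h)]

end Rigidity

theorem multiset_eq_of_powerSums_small_general (A B : Multiset ℂ) (M : ℝ)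
    (hA : ∀ z ∈ A, ‖z‖ = M) (hB : ∀ z ∈ B, ‖z‖ = M)
    (lam C : ℝ) (hlam0 : 0 < lam) (hlamM : lam < M) (s₀ : ℕ)
    (hbd : ∀ s : ℕ, s₀ ≤ s →
      ‖(B.map fun z => z ^ s).sum - (A.map fun z => z ^ s).sum‖
        ≤ C * lam ^ s) :
    A = B := by
  have hM : 0 < M := hlam0.trans hlamM
  have hu : ‖(M : ℂ)⁻¹‖ = M⁻¹ := by simp [hM.le]
  have hscale : ∀ S : Multiset ℂ, (∀ z ∈ S, ‖z‖ = M) → ∀ w ∈ S.map (· * (M : ℂ)⁻¹), ‖w‖ = 1 := by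
    intro S hS w hw
    obtain ⟨v, hv, rfl⟩ := Multiset.mem_map.1 hw
    rw [norm_mul, hS v hv, hu, mul_inv_cancel₀ hM.ne']
  refine Multiset.map_injective (mul_left_injective₀ (by simpa using hM.ne'))
    (Multiset.eq_of_tendsto_powerSum_sub (hscale A hA) (hscale B hB) ?_)
  have hgeom : Tendsto (fun s : ℕ => C * (lam / M) ^ s) atTop (𝓝 0) := by
    simpa using (tendsto_pow_atTop_nhds_zero_of_lt_one (by positivity)
      ((div_lt_one hM).2 hlamM)).const_mul C
  refine squeeze_zero_norm' ?_ hgeom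
  filter_upwards [eventually_ge_atTop s₀] with s hs
  rw [Multiset.powerSum_map_mul, Multiset.powerSum_map_mul, ← sub_mul, norm_mul, norm_pow, hu,
    div_pow, div_eq_mul_inv, ← mul_assoc, inv_pow]
  exact mul_le_mul_of_nonneg_right (hbd s hs) (by positivity)

/-- Power-sum rigidity: if `A` and `B` are finite multisets of complex numbers all of
modulus `M > 0`, and the difference of their `s`-th power sums is `O(λ^s)` for some
`0 < λ < M`, then `A = B`. -/
theorem multiset_eq_of_powerSums_small (A B : Multiset ℂ) (M : ℝ) (hM : 0 < M)
    (hA : ∀ z ∈ A, ‖z‖ = M) (hB : ∀ z ∈ B, ‖z‖ = M)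
    (lam C : ℝ) (hlam0 : 0 < lam) (hlamM : lam < M) (s₀ : ℕ)
    (hbd : ∀ s : ℕ, s₀ ≤ s →
      ‖(B.map fun z => z ^ s).sum - (A.map fun z => z ^ s).sum‖
        ≤ C * lam ^ s) :
    A = B :=
  multiset_eq_of_powerSums_small_general A B M hA hB lam C hlam0 hlamM s₀ hbd
end

section
/- Let K be a field of characteristic zero and let g₁, g₂ ∈ GL_n(K) with g₁ semisimple (diagonalizable over the algebraic closure). If g₂^s is conjugate to g₁^s in GL_n(K) for infinitely many prime numbers s, then g₂ is conjugate to g₁ in GL_n(K). -/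
/-!
Pass to `L = AlgebraicClosure K`. Only finitely many orders of roots of unity occur among the
ratios of eigenvalues of `g₁` and `g₂`, so some admissible prime `s` makes `x ↦ x ^ s` injective
on their spectra. Let `u` conjugate `g₁ ^ s` to `g₂ ^ s` and put `B = u g₁ u⁻¹`. As `B` is
diagonalizable and `x ↦ x ^ s` separates its eigenvalues, whatever commutes with
`B ^ s = g₂ ^ s` commutes with `B`, in particular `g₂` does. Then `c = g₂ B⁻¹` satisfies
`c ^ s = 1`, so it is semisimple, and on a common eigenvector of `c` and `B` its eigenvalue `ζ`
satisfies `(ζ λ) ^ s = λ ^ s` with `ζ λ` an eigenvalue of `g₂` and `λ ≠ 0` one of `g₁`.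
Hence `ζ = 1`, so `c = 1` and `g₂ = B`.
-/

theorem Set.Infinite.exists_mem_forall_pow_eq_one_imp_eq_one {T : Set ℕ} (hT : T.Infinite)
    (hT_prime : ∀ s ∈ T, s.Prime) {M : Type*} [Monoid M] {S : Set M} (hS : S.Finite) :
    ∃ s ∈ T, ∀ x ∈ S, x ^ s = 1 → x = 1 := by
  obtain ⟨s, hsT, hs⟩ := (hT.sdiff (hS.image orderOf)).nonempty
  refine ⟨s, hsT, fun x hx hxs => ?_⟩
  rcases (hT_prime s hsT).eq_one_or_self_of_dvd _ (orderOf_dvd_of_pow_eq_one hxs) with h | h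
  · exact orderOf_eq_one_iff.mp h
  · exact absurd ⟨x, hx, h⟩ hs

theorem Set.Infinite.exists_mem_injOn_pow {T : Set ℕ} (hT : T.Infinite)
    (hT_prime : ∀ s ∈ T, s.Prime) {K : Type*} [Field K] {S : Set K} (hS : S.Finite) :
    ∃ s ∈ T, Set.InjOn (· ^ s) S := by
  obtain ⟨s, hsT, hs⟩ := hT.exists_mem_forall_pow_eq_one_imp_eq_one hT_prime (hS.div hS)
  have hs0 := (hT_prime s hsT).ne_zero
  refine ⟨s, hsT, fun x hx y hy (hxy : x ^ s = y ^ s) => ?_⟩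
  rcases eq_or_ne y 0 with rfl | hy0
  · rwa [zero_pow hs0, pow_eq_zero_iff hs0] at hxy
  · have : (x / y) ^ s = 1 := by rw [div_pow, hxy, div_self (pow_ne_zero _ hy0)]
    exact (div_eq_one_iff_eq hy0).mp (hs _ (Set.div_mem_div hx hy) this)

theorem Units.commute_conj_iff {M : Type*} [Monoid M] (u : Mˣ) {a b : M} :
    Commute a (u * b * ↑u⁻¹) ↔ Commute (↑u⁻¹ * a * u) b := by
  rw [← commute_map_iff (MulDistribMulAction.toMulEquiv M (ConjAct.toConjAct u⁻¹)).injective]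
  simp [ConjAct.units_smul_def, mul_assoc]

namespace Module.End

variable {K V : Type*} [Field K] [IsAlgClosed K] [AddCommGroup V] [Module K V]
  [FiniteDimensional K V]

theorem exists_hasEigenvector_of_commute {f g : End K V} (hfg : Commute f g) {μ : K}
    (hμ : f.HasEigenvalue μ) : ∃ ν v, f.HasEigenvector μ v ∧ g.HasEigenvector ν v := by
  have hg : Set.MapsTo g (f.eigenspace μ) (f.eigenspace μ) :=
    mapsTo_genEigenspace_of_comm hfg μ 1
  have : Nontrivial (f.eigenspace μ) := Submodule.nontrivial_iff_ne_bot.mpr hμ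
  obtain ⟨ν, hν⟩ := exists_eigenvalue (g.restrict hg)
  obtain ⟨⟨v, hvμ⟩, hv⟩ := hν.exists_hasEigenvector
  refine ⟨ν, v, ⟨hvμ, fun h => hv.2 (Subtype.ext h)⟩, ⟨?_, fun h => hv.2 (Subtype.ext h)⟩⟩
  exact mem_eigenspace_iff.mpr (congrArg Subtype.val hv.apply_eq_smul)

theorem eq_one_of_pow_eq_one {f : End K V} {s : ℕ} (hs : (s : K) ≠ 0) (hfs : f ^ s = 1)
    (hf : ∀ μ, f.HasEigenvalue μ → μ = 1) : f = 1 := by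
  have hss : f.IsSemisimple := by
    refine isSemisimple_of_squarefree_aeval_eq_zero
      (Polynomial.separable_X_pow_sub_C (1 : K) hs one_ne_zero).squarefree ?_
    simp [hfs]
  have htop : f.eigenspace 1 = ⊤ := by
    rw [← hss.iSup_eigenspace_eq_top]
    refine le_antisymm (le_iSup _ 1) (iSup_le fun μ => ?_)
    by_cases hμ : f.HasEigenvalue μ
    · rw [hf μ hμ]
    · rw [hasEigenvalue_iff, not_not] at hμ
      simp [hμ]
  ext1 v
  simpa using mem_eigenspace_iff.mp (htop ▸ Submodule.mem_top : v ∈ f.eigenspace 1)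

theorem eq_of_pow_eq_pow_of_commute {f g : End K V} (hfg : Commute f g) (hg : IsUnit g)
    {s : ℕ} (hs : (s : K) ≠ 0) (hpow : f ^ s = g ^ s)
    (hinj : Set.InjOn (· ^ s) (spectrum K f ∪ spectrum K g)) : f = g := by
  obtain ⟨u, rfl⟩ := hg
  set c := f * ↑u⁻¹
  have hcu : Commute c u := hfg.mul_left (Commute.refl (u : End K V)).units_inv_left
  have hcs : c ^ s = 1 := by
    rw [hfg.units_inv_right.mul_pow, hpow, ← (Commute.refl _).units_inv_right.mul_pow,
      Units.mul_inv, one_pow]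
  suffices c = 1 by rw [← one_mul (u : End K V), ← this, mul_assoc, Units.inv_mul, mul_one]
  refine eq_one_of_pow_eq_one hs hcs fun ζ hζ => ?_
  obtain ⟨ν, v, hvc, hvu⟩ := exists_hasEigenvector_of_commute hcu hζ
  have hζs : ζ ^ s = 1 := by
    have := hvc.pow_apply s
    rw [hcs, one_apply] at this
    exact smul_left_injective K hvc.2 (this.symm.trans (one_smul K v).symm)
  have hν_mem := (hasEigenvalue_of_hasEigenvector hvu).mem_spectrum
  have hν : ν ≠ 0 := fun h => spectrum.zero_notMem K u.isUnit (h ▸ hν_mem)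
  have hfv : f.HasEigenvector (ζ * ν) v := by
    refine ⟨mem_eigenspace_iff.mpr ?_, hvc.2⟩
    calc f v = c ((u : End K V) v) := by rw [← mul_apply, mul_assoc, Units.inv_mul, mul_one]
      _ = (ζ * ν) • v := by
        rw [hvu.apply_eq_smul, map_smul, hvc.apply_eq_smul, smul_smul, mul_comm]
  have := hinj (Or.inl (hasEigenvalue_of_hasEigenvector hfv).mem_spectrum) (Or.inr hν_mem)
    (show (ζ * ν) ^ s = ν ^ s by rw [mul_pow, hζs, one_mul])
  exact (mul_eq_right₀ hν).mp this

end Module.End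

namespace Matrix

section CommRing

variable {n R : Type*} [Fintype n] [DecidableEq n] [CommRing R] [NoZeroDivisors R]

theorem commute_diagonal_iff {X : Matrix n n R} {d : n → R} :
    Commute X (diagonal d) ↔ ∀ i j, d i ≠ d j → X i j = 0 := by
  simp only [Commute, SemiconjBy, ← ext_iff, mul_diagonal, diagonal_mul]
  refine forall₂_congr fun i j => ?_
  rw [mul_comm (d i), ← sub_eq_zero, ← mul_sub, mul_eq_zero, sub_eq_zero, or_comm, eq_comm,
    or_iff_not_imp_left]

theorem commute_diagonal_of_commute_diagonal_comp {X : Matrix n n R} {d : n → R} {f : R → R}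
    (hf : Set.InjOn f (Set.range d)) (h : Commute X (diagonal (f ∘ d))) :
    Commute X (diagonal d) :=
  commute_diagonal_iff.mpr fun i j hij =>
    commute_diagonal_iff.mp h i j fun hf' => hij (hf ⟨i, rfl⟩ ⟨j, rfl⟩ hf')

theorem commute_of_commute_pow_of_eq_conj_diagonal {X B : Matrix n n R}
    {u : (Matrix n n R)ˣ} {d : n → R} (hB : B = u * diagonal d * (↑u⁻¹ : Matrix n n R))
    {s : ℕ} (hinj : Set.InjOn (· ^ s) (Set.range d)) (h : Commute X (B ^ s)) :
    Commute X B := by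
  rw [hB, Units.conj_pow, diagonal_pow, Units.commute_conj_iff] at h
  rw [hB, Units.commute_conj_iff]
  exact commute_diagonal_of_commute_diagonal_comp hinj h

end CommRing

theorem eq_of_pow_eq_pow_of_eq_conj_diagonal {K n : Type*} [Field K] [IsAlgClosed K]
    [Fintype n] [DecidableEq n] {A B : Matrix n n K} {u : (Matrix n n K)ˣ} {d : n → K}
    (hB : B = u * diagonal d * (↑u⁻¹ : Matrix n n K)) (hB_unit : IsUnit B) {s : ℕ}
    (hs : (s : K) ≠ 0) (hpow : A ^ s = B ^ s)
    (hinj : Set.InjOn (· ^ s) (spectrum K A ∪ spectrum K B)) : A = B := by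
  have hrange : Set.range d = spectrum K B := by
    rw [hB, spectrum.units_conjugate, spectrum_diagonal]
  have hAB : Commute A B := commute_of_commute_pow_of_eq_conj_diagonal hB
    (hrange ▸ hinj.mono Set.subset_union_right) (hpow ▸ Commute.self_pow A s)
  refine toLinAlgEquiv'.injective (Module.End.eq_of_pow_eq_pow_of_commute (hAB.map _)
    (hB_unit.map _) hs (by rw [← map_pow, ← map_pow, hpow]) ?_)
  simpa only [AlgEquiv.spectrum_eq] using hinj

theorem eq_conj_of_pow_eq_conj_pow {K L n : Type*} [Field K] [Field L] [IsAlgClosed L]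
    [Algebra K L] [Fintype n] [DecidableEq n] {g₁ g₂ : Matrix n n K} (h₁ : IsUnit g₁)
    {p : (Matrix n n L)ˣ} {d : n → L}
    (hg₁ : g₁.map (algebraMap K L) = p * diagonal d * (↑p⁻¹ : Matrix n n L))
    {s : ℕ} (hs : (s : L) ≠ 0) {u : (Matrix n n K)ˣ}
    (hg₂ : g₂ ^ s = u * g₁ ^ s * (↑u⁻¹ : Matrix n n K))
    (hinj : Set.InjOn (· ^ s)
      (spectrum L (g₂.map (algebraMap K L)) ∪ spectrum L (g₁.map (algebraMap K L)))) :
    g₂ = u * g₁ * (↑u⁻¹ : Matrix n n K) := by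
  set φ := (algebraMap K L).mapMatrix (m := n)
  set v := Units.map φ.toMonoidHom u
  have hφ (M : Matrix n n K) :
      φ (u * M * (↑u⁻¹ : Matrix n n K)) = v * φ M * (↑v⁻¹ : Matrix n n L) := by
    simp only [map_mul, v, Units.coe_map, Units.coe_map_inv]
    rfl
  have hB : φ (u * g₁ * (↑u⁻¹ : Matrix n n K)) =
      (v * p : (Matrix n n L)ˣ) * diagonal d * (↑(v * p)⁻¹ : Matrix n n L) := by
    rw [hφ, RingHom.mapMatrix_apply, hg₁, _root_.mul_inv_rev]
    simp only [Units.val_mul, mul_assoc]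
  have hB_unit : IsUnit (φ (u * g₁ * (↑u⁻¹ : Matrix n n K))) :=
    ((u.isUnit.mul h₁).mul u⁻¹.isUnit).map φ
  have hpow : φ g₂ ^ s = φ (u * g₁ * (↑u⁻¹ : Matrix n n K)) ^ s := by
    rw [← map_pow, ← map_pow, hg₂, Units.conj_pow]
  have hspec : spectrum L (φ (u * g₁ * (↑u⁻¹ : Matrix n n K))) = spectrum L (φ g₁) := by
    rw [hφ, spectrum.units_conjugate]
  exact map_injective (algebraMap K L).injective
    (eq_of_pow_eq_pow_of_eq_conj_diagonal hB hB_unit hs hpow (hspec ▸ hinj))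

end Matrix

theorem conjugation_lemma_general {K : Type*} [Field K] [CharZero K] {n : ℕ}
    (g₁ g₂ : Matrix (Fin n) (Fin n) K) (h₁ : IsUnit g₁.det)
    (hss : ∃ (P : Matrix (Fin n) (Fin n) (AlgebraicClosure K)) (D : Fin n → AlgebraicClosure K),
      IsUnit P.det ∧
        g₁.map (algebraMap K (AlgebraicClosure K)) = P * Matrix.diagonal D * P⁻¹)
    (hconj : {s : ℕ | Nat.Prime s ∧ ∃ P : Matrix (Fin n) (Fin n) K,
        IsUnit P.det ∧ g₂ ^ s = P * g₁ ^ s * P⁻¹}.Infinite) :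
    ∃ P : Matrix (Fin n) (Fin n) K, IsUnit P.det ∧ g₂ = P * g₁ * P⁻¹ := by
  obtain ⟨P, D, hP, hg₁⟩ := hss
  obtain ⟨p, rfl⟩ := (Matrix.isUnit_iff_isUnit_det P).mpr hP
  obtain ⟨s, ⟨hs, Q, hQ, hg₂⟩, hinj⟩ := hconj.exists_mem_injOn_pow (fun s hs => hs.1)
    ((g₂.map (algebraMap K (AlgebraicClosure K))).finite_spectrum.union
      (g₁.map (algebraMap K (AlgebraicClosure K))).finite_spectrum)
  obtain ⟨u, rfl⟩ := (Matrix.isUnit_iff_isUnit_det Q).mpr hQ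
  rw [← Matrix.coe_units_inv] at hg₁ hg₂
  refine ⟨u, hQ, ?_⟩
  rw [← Matrix.coe_units_inv]
  exact Matrix.eq_conj_of_pow_eq_conj_pow ((Matrix.isUnit_iff_isUnit_det g₁).mpr h₁) hg₁
    (Nat.cast_ne_zero.mpr hs.ne_zero) hg₂ hinj

/-- Conjugation lemma: over a field `K` of characteristic zero, if `g₁` is semisimple
(diagonalizable over the algebraic closure) and `g₂ ^ s` is conjugate to `g₁ ^ s` in
`GL n K` for infinitely many primes `s`, then `g₂` is conjugate to `g₁`. -/
theorem conjugation_lemma {K : Type*} [Field K] [CharZero K] {n : ℕ}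
    (g₁ g₂ : Matrix (Fin n) (Fin n) K) (h₁ : IsUnit g₁.det) (h₂ : IsUnit g₂.det)
    (hss : ∃ (P : Matrix (Fin n) (Fin n) (AlgebraicClosure K)) (D : Fin n → AlgebraicClosure K),
      IsUnit P.det ∧
        g₁.map (algebraMap K (AlgebraicClosure K)) = P * Matrix.diagonal D * P⁻¹)
    (hconj : {s : ℕ | Nat.Prime s ∧ ∃ P : Matrix (Fin n) (Fin n) K,
        IsUnit P.det ∧ g₂ ^ s = P * g₁ ^ s * P⁻¹}.Infinite) :
    ∃ P : Matrix (Fin n) (Fin n) K, IsUnit P.det ∧ g₂ = P * g₁ * P⁻¹ :=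
  conjugation_lemma_general g₁ g₂ h₁ hss hconj
end

section
/- Let q be a prime power and N, n, d integers with n ≥ N/2 and d ≥ 1. Let G_1, ..., G_d be linear subvarieties of P^N over F_q, each of dimension n. Then |G_1(F_q) ∪ ... ∪ G_d(F_q)| ≤ d(π_n − π_{2n−N}) + π_{2n−N}, where π_m = q^m + ... + 1 for m ≥ 0. -/
open Finset Module
open scoped LinearAlgebra.Projectivization

/-!
A subspace `W` of dimension `m` carries `π_{m-1}` projective points, and two subspaces of
dimension `n + 1` in `F^(N+1)` meet in dimension at least `2n - N + 1`. Hence every `G i` shares at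
least `π_{2n-N}` points with `G 0`, so contributes at most `π_n - π_{2n-N}` new ones.
-/

namespace Projectivization

variable {K V : Type*} [Field K] [AddCommGroup V] [Module K V]

theorem range_map_subtype (W : Submodule K V) :
    Set.range (map W.subtype W.injective_subtype) = {x : ℙ K V | x.rep ∈ W} := by
  ext x
  constructor
  · rintro ⟨y, rfl⟩
    induction y using ind with
    | h w hw =>
      obtain ⟨a, ha⟩ := exists_smul_eq_mk_rep K (W.subtype w) (by simpa using hw)
      rw [Set.mem_ofPred_eq, map_mk, ← ha]
      exact W.smul_mem _ w.2
  · intro hx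
    refine ⟨mk K ⟨x.rep, hx⟩ (by simpa using x.rep_nonzero), ?_⟩
    rw [map_mk]
    exact x.mk_rep

theorem ncard_setOf_rep_mem [Finite K] (W : Submodule K V) :
    {x : ℙ K V | x.rep ∈ W}.ncard = ∑ i ∈ range (finrank K W), Nat.card K ^ i := by
  rw [← range_map_subtype, Set.ncard_range_of_injective (map_injective _ _),
    card_of_finrank K W rfl]

end Projectivization

theorem Submodule.finrank_add_finrank_le_finrank_inf_add {K V : Type*} [Field K] [AddCommGroup V]
    [Module K V] [FiniteDimensional K V] (W W' : Submodule K V) :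
    finrank K W + finrank K W' ≤ finrank K ↥(W ⊓ W') + finrank K V := by
  rw [← finrank_sup_add_finrank_inf_eq, add_comm]
  exact Nat.add_le_add_left (Submodule.finrank_le _) _

theorem Set.ncard_iUnion_le_of_le_ncard_inter {α ι : Type*} [Fintype ι] [DecidableEq ι]
    {S : ι → Set α} {a b : ℕ} (i₀ : ι) (hS : ∀ i, (S i).ncard = a) (hfin : ∀ i, (S i).Finite)
    (hb : ∀ i, b ≤ (S i ∩ S i₀).ncard) :
    (⋃ i, S i).ncard ≤ Fintype.card ι * (a - b) + b := by
  have hba : b ≤ a := by simpa [← hS i₀] using hb i₀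
  have hunion : (⋃ i, S i) = S i₀ ∪ ⋃ i ∈ Finset.univ.erase i₀, S i \ S i₀ := by
    ext x
    simp only [Set.mem_iUnion, Set.mem_union, Set.mem_sdiff, mem_erase, Finset.mem_univ, and_true]
    constructor
    · rintro ⟨i, hi⟩
      by_cases hx : x ∈ S i₀
      · exact Or.inl hx
      · exact Or.inr ⟨i, by rintro rfl; exact hx hi, hi, hx⟩
    · rintro (hx | ⟨i, -, hi, -⟩)
      exacts [⟨i₀, hx⟩, ⟨i, hi⟩]
  have hdiff : ∀ i, (S i \ S i₀).ncard ≤ a - b := fun i ↦ by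
    have := Set.ncard_inter_add_ncard_sdiff_eq_ncard (S i) (S i₀) (hfin i)
    have := hb i
    have := hS i
    omega
  have hcard : (Finset.univ.erase i₀).card = Fintype.card ι - 1 := by
    rw [card_erase_of_mem (Finset.mem_univ _), card_univ]
  calc (⋃ i, S i).ncard
      ≤ a + ∑ i ∈ Finset.univ.erase i₀, (S i \ S i₀).ncard := by
        rw [hunion, ← hS i₀]
        exact (Set.ncard_union_le _ _).trans (Nat.add_le_add_left (set_ncard_biUnion_le _ _) _)
    _ ≤ a + (Fintype.card ι - 1) * (a - b) := by
        rw [← hcard, ← smul_eq_mul]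
        exact Nat.add_le_add_left (sum_le_card_nsmul _ _ _ fun i _ ↦ hdiff i) _
    _ = Fintype.card ι * (a - b) + b := by
        obtain ⟨k, hk⟩ := Nat.exists_eq_add_one_of_ne_zero (Fintype.card_pos_iff.2 ⟨i₀⟩).ne'
        rw [hk, Nat.add_sub_cancel, add_one_mul]
        linarith [Nat.sub_add_cancel hba]

/-- Union of `d` linear subvarieties of dimension `n ≥ N/2` in `ℙ^N` over a finite
field: the number of rational points is at most `d(π_n − π_{2n−N}) + π_{2n−N}`. -/
theorem card_union_linear_le {F : Type*} [Field F] [Fintype F] (N n d : ℕ)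
    (hd : 1 ≤ d) (h2n : N ≤ 2 * n)
    (G : Fin d → Submodule F (Fin (N + 1) → F))
    (hG : ∀ i, Module.finrank F (G i) = n + 1) :
    Set.ncard (⋃ i, {x : Projectivization F (Fin (N + 1) → F) | x.rep ∈ G i})
      ≤ d * ((∑ i ∈ Finset.range (n + 1), (Fintype.card F) ^ i) -
              ∑ i ∈ Finset.range (2 * n - N + 1), (Fintype.card F) ^ i)
        + ∑ i ∈ Finset.range (2 * n - N + 1), (Fintype.card F) ^ i := by
  have hmeet : ∀ i j, 2 * n - N + 1 ≤ finrank F ↥(G i ⊓ G j) := fun i j ↦ by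
    have := (G i).finrank_add_finrank_le_finrank_inf_add (G j)
    rw [hG, hG, finrank_fin_fun] at this
    omega
  have hbound := Set.ncard_iUnion_le_of_le_ncard_inter (S := fun i ↦ {x : ℙ F _ | x.rep ∈ G i}) ⟨0, hd⟩
    (fun i ↦ by rw [Projectivization.ncard_setOf_rep_mem, hG]) (fun _ ↦ Set.toFinite _)
    (fun i ↦ show _ ≤ {x : ℙ F _ | x.rep ∈ G i ⊓ G ⟨0, hd⟩}.ncard by
      rw [Projectivization.ncard_setOf_rep_mem]
      exact sum_le_sum_of_subset (range_subset_range.2 (hmeet _ _)))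
  simpa [Nat.card_eq_fintype_card] using hbound
end

section
/- For positive integers r ≤ N, multidegree d = (d_1, ..., d_r) of positive integers, n = N − r, δ = max(d_1,...,d_r), and d = d_1···d_r, define b'_n(N, d) = (−1)^{n+1}(n+1) + (−1)^N Σ_{c=r}^{N} (−1)^c C(N+1, c+1) Σ_{ν ∈ M(c)} d_1^{ν_1}···d_r^{ν_r}, where M(c) is the set of r-tuples of positive integers summing to c. Then b'_n(N, d) ≤ (−1)^{n+1}(n+1) + d · C(N+1, n) · (δ+1)^n. -/
/-!
Since `(-1)^(N+c) ≤ 1`, the alternating sum is at most `Σ_c C(N+1, c+1) Σ_{ν ∈ M(c)} d^ν`.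
A monomial `d^ν` with `ν ∈ M(c)` is at most `d · δ^(c-r)`, and stars and bars gives
`#M(c) = C(c-1, c-r) ≤ C(c+1, c-r)`. The identity `C(N+1, c+1) C(c+1, c-r) = C(N+1, n) C(n, c-r)`
then bounds the sum by `d · C(N+1, n) · Σ_k C(n, k) δ^k = d · C(N+1, n) · (δ+1)^n`.
-/

open Finset

/-- `tuplesM r c` : the set of `r`-tuples of positive integers summing to `c`. -/
def tuplesM (r c : ℕ) : Finset (Fin r → ℕ) :=
  (Finset.Nat.antidiagonalTuple r c).filter fun ν => ∀ i, 1 ≤ ν i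

/-- The primitive middle Betti number `b'_n(N, d)` of a nonsingular complete
intersection of codimension `r` and multidegree `d` in `ℙ^N` (here `n = N − r`),
given by the explicit alternating sum. -/
def bprime (N r : ℕ) (d : Fin r → ℕ) : ℤ :=
  (-1) ^ (N - r + 1) * (N - r + 1) +
    (-1) ^ N * ∑ c ∈ Finset.Icc r N, (-1) ^ c * ((N + 1).choose (c + 1) : ℤ) *
      ∑ ν ∈ tuplesM r c, ∏ i, (d i : ℤ) ^ ν i

theorem Nat.choose_mul_choose_eq_choose_mul_choose {m a j : ℕ} (hja : j ≤ a) (ham : a ≤ m) :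
    m.choose a * a.choose j = m.choose (m - a + j) * (m - a + j).choose j := by
  rw [Nat.choose_mul hja, Nat.choose_mul (Nat.le_add_left j _)]
  congr 1
  exact Nat.choose_symm_of_eq_add (by omega)

theorem Finset.Nat.card_antidiagonalTuple (r k : ℕ) :
    #(Nat.antidiagonalTuple r k) = (r + k - 1).choose k := by
  rw [card_eq_of_equiv_fintype ((Equiv.subtypeEquivRight fun _ => Nat.mem_antidiagonalTuple).trans
    (Sym.equivNatSumOfFintype (Fin r) k).symm), Sym.card_sym_eq_choose, Fintype.card_fin]

theorem neg_one_pow_mul_le_self (m : ℕ) {x : ℤ} (hx : 0 ≤ x) : (-1) ^ m * x ≤ x := by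
  rcases neg_one_pow_eq_or ℤ m with h | h <;> rw [h] <;> linarith

section tuplesM

variable {r c : ℕ} {ν : Fin r → ℕ}

theorem one_le_of_mem_tuplesM (hν : ν ∈ tuplesM r c) (i : Fin r) : 1 ≤ ν i :=
  (mem_filter.1 hν).2 i

theorem sum_sub_one_of_mem_tuplesM (hν : ν ∈ tuplesM r c) : ∑ i, (ν i - 1) = c - r := by
  simp only [tuplesM, mem_filter, Nat.mem_antidiagonalTuple] at hν
  rw [sum_tsub_distrib _ fun i _ => hν.2 i, hν.1]
  simp

theorem card_tuplesM_le (r c : ℕ) : #(tuplesM r c) ≤ (c - 1).choose (c - r) := by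
  calc #(tuplesM r c) ≤ #(Nat.antidiagonalTuple r (c - r)) := by
        refine card_le_card_of_injOn (fun ν i => ν i - 1)
          (fun ν hν => Nat.mem_antidiagonalTuple.2 (sum_sub_one_of_mem_tuplesM hν)) ?_
        intro ν hν μ hμ h
        funext i
        have hi : ν i - 1 = μ i - 1 := congrFun h i
        have := one_le_of_mem_tuplesM hν i
        have := one_le_of_mem_tuplesM hμ i
        omega
    _ = (c - 1).choose (c - r) := by
        rw [Nat.card_antidiagonalTuple]
        rcases le_or_gt r c with h | h
        · congr 1; omega
        · simp [Nat.sub_eq_zero_of_le h.le]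

theorem prod_pow_le_of_mem_tuplesM (d : Fin r → ℕ) (hν : ν ∈ tuplesM r c) :
    ∏ i, d i ^ ν i ≤ (∏ i, d i) * univ.sup d ^ (c - r) := by
  calc ∏ i, d i ^ ν i = (∏ i, d i) * ∏ i, d i ^ (ν i - 1) := by
        rw [← prod_mul_distrib]
        exact prod_congr rfl fun i _ => by
          rw [← pow_succ', Nat.sub_add_cancel (one_le_of_mem_tuplesM hν i)]
    _ ≤ (∏ i, d i) * ∏ i, univ.sup d ^ (ν i - 1) := by
        gcongr with i
        exact le_sup (mem_univ i)
    _ = (∏ i, d i) * univ.sup d ^ (c - r) := by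
        rw [prod_pow_eq_pow_sum, sum_sub_one_of_mem_tuplesM hν]

theorem sum_tuplesM_prod_pow_le (d : Fin r → ℕ) :
    ∑ ν ∈ tuplesM r c, ∏ i, d i ^ ν i ≤
      (c - 1).choose (c - r) * ((∏ i, d i) * univ.sup d ^ (c - r)) :=
  (sum_le_card_nsmul _ _ _ fun _ hν => prod_pow_le_of_mem_tuplesM d hν).trans
    (Nat.mul_le_mul_right _ (card_tuplesM_le r c))

theorem choose_mul_sum_tuplesM_prod_pow_le {N : ℕ} (hrc : r ≤ c) (hcN : c ≤ N)
    (d : Fin r → ℕ) :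
    (N + 1).choose (c + 1) * ∑ ν ∈ tuplesM r c, ∏ i, d i ^ ν i ≤
      (∏ i, d i) * (N + 1).choose (N - r) *
        (univ.sup d ^ (c - r) * (N - r).choose (c - r)) := by
  have key := Nat.choose_mul_choose_eq_choose_mul_choose (m := N + 1) (a := c + 1)
    (j := c - r) (by omega) (by omega)
  rw [show N + 1 - (c + 1) + (c - r) = N - r by omega] at key
  calc (N + 1).choose (c + 1) * ∑ ν ∈ tuplesM r c, ∏ i, d i ^ ν i
      ≤ (N + 1).choose (c + 1) *
          ((c + 1).choose (c - r) * ((∏ i, d i) * univ.sup d ^ (c - r))) := by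
        gcongr
        exact (sum_tuplesM_prod_pow_le d).trans
          (Nat.mul_le_mul_right _ (Nat.choose_le_choose _ (by omega)))
    _ = _ := by rw [← mul_assoc, key]; ring

end tuplesM

theorem sum_Icc_choose_mul_sum_tuplesM_le (N r : ℕ) (d : Fin r → ℕ) :
    ∑ c ∈ Icc r N, (N + 1).choose (c + 1) * ∑ ν ∈ tuplesM r c, ∏ i, d i ^ ν i ≤
      (∏ i, d i) * (N + 1).choose (N - r) * (univ.sup d + 1) ^ (N - r) := by
  set δ := univ.sup d
  calc _ ≤ ∑ c ∈ Icc r N,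
          (∏ i, d i) * (N + 1).choose (N - r) * (δ ^ (c - r) * (N - r).choose (c - r)) :=
        sum_le_sum fun c hc =>
          choose_mul_sum_tuplesM_prod_pow_le (mem_Icc.1 hc).1 (mem_Icc.1 hc).2 d
    _ = (∏ i, d i) * (N + 1).choose (N - r) *
          ∑ k ∈ range (N + 1 - r), δ ^ k * (N - r).choose k := by
        rw [← mul_sum, ← Ico_add_one_right_eq_Icc, sum_Ico_eq_sum_range]
        simp
    _ ≤ (∏ i, d i) * (N + 1).choose (N - r) *
          ∑ k ∈ range (N - r + 1), δ ^ k * (N - r).choose k :=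
        Nat.mul_le_mul_left _ (sum_le_sum_of_subset (range_subset_range.2 (by omega)))
    _ = (∏ i, d i) * (N + 1).choose (N - r) * (δ + 1) ^ (N - r) := by
        simp [add_pow]

theorem bprime_le_general (N r : ℕ) (d : Fin r → ℕ) :
    bprime N r d ≤ (-1) ^ (N - r + 1) * (N - r + 1) +
      (∏ i, (d i : ℤ)) * ((N + 1).choose (N - r) : ℤ) *
        ((Finset.univ.sup d : ℕ) + 1 : ℤ) ^ (N - r) := by
  unfold bprime
  apply add_le_add le_rfl
  calc (-1) ^ N * ∑ c ∈ Icc r N, (-1) ^ c * ((N + 1).choose (c + 1) : ℤ) *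
          ∑ ν ∈ tuplesM r c, ∏ i, (d i : ℤ) ^ ν i
      = ∑ c ∈ Icc r N, (-1) ^ (N + c) * (((N + 1).choose (c + 1) : ℤ) *
          ∑ ν ∈ tuplesM r c, ∏ i, (d i : ℤ) ^ ν i) := by
        rw [mul_sum]
        exact sum_congr rfl fun c _ => by ring
    _ ≤ ∑ c ∈ Icc r N, ((N + 1).choose (c + 1) : ℤ) *
          ∑ ν ∈ tuplesM r c, ∏ i, (d i : ℤ) ^ ν i :=
        sum_le_sum fun c _ => neg_one_pow_mul_le_self _ (by positivity)
    _ ≤ _ := by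
        have := sum_Icc_choose_mul_sum_tuplesM_le N r d
        zify at this
        exact this

/-- Bound for the primitive middle Betti number:
`b'_n(N,d) ≤ (−1)^{n+1}(n+1) + d·C(N+1,n)·(δ+1)^n` with `n = N − r`,
`d = d₁⋯d_r` and `δ = max dᵢ`. -/
theorem bprime_le (N r : ℕ) (hr : 1 ≤ r) (hrN : r ≤ N) (d : Fin r → ℕ)
    (hd : ∀ i, 1 ≤ d i) :
    bprime N r d ≤ (-1) ^ (N - r + 1) * (N - r + 1) +
      (∏ i, (d i : ℤ)) * ((N + 1).choose (N - r) : ℤ) *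
        ((Finset.univ.sup d : ℕ) + 1 : ℤ) ^ (N - r) :=
  bprime_le_general N r d
end

section
/- Let A ⊂ ℂ be a finite set and suppose the power series Σ_{s≥0} (Σ_{α∈A} α^s) z^s has radius of convergence strictly greater than 1/M, where M > 0. Then every element of A has modulus strictly less than M. -/
/-!
Take `β ∈ A` of maximal modulus and suppose `M ≤ ‖β‖`. For `0 < t < 1` the point `z = t β⁻¹`
satisfies `‖α z‖ < 1` for every `α ∈ A`, so the series sums there to the generating function
`∑_{α ∈ A} (1 - α z)⁻¹`; since `‖z‖ ≤ 1/M < ρ`, this sum stays bounded by `∑_s ‖p_s‖ ρ^s`,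
where `p_s = ∑_{α ∈ A} α^s`.
But as `t → 1⁻` the point `z` tends to the pole `β⁻¹`, where the generating function blows up.
-/

open Filter Topology

section GeneratingFunction

variable {𝕜 : Type*} [NormedField 𝕜]

theorem hasSum_powerSum_mul_pow (A : Finset 𝕜) {z : 𝕜} (hz : ∀ α ∈ A, ‖α * z‖ < 1) :
    HasSum (fun s : ℕ => (∑ α ∈ A, α ^ s) * z ^ s) (∑ α ∈ A, (1 - α * z)⁻¹) := by
  simp_rw [Finset.sum_mul, ← mul_pow]
  exact hasSum_sum fun α hα => hasSum_geometric_of_norm_lt_one (hz α hα)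

theorem HasSum.norm_le_tsum_norm_mul_pow {a : ℕ → 𝕜} {z S : 𝕜} {ρ : ℝ}
    (hS : HasSum (fun s => a s * z ^ s) S) (hz : ‖z‖ ≤ ρ)
    (hρ : Summable fun s => ‖a s‖ * ρ ^ s) : ‖S‖ ≤ ∑' s, ‖a s‖ * ρ ^ s :=
  hS.norm_le_of_bounded hρ.hasSum fun s => by
    rw [norm_mul, norm_pow]
    gcongr

theorem tendsto_norm_inv_one_sub_mul_atTop {β : 𝕜} (hβ : β ≠ 0) :
    Tendsto (fun z => ‖(1 - β * z)⁻¹‖) (𝓝[≠] β⁻¹) atTop := by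
  have hzero : Tendsto (fun z => 1 - β * z) (𝓝[≠] β⁻¹) (𝓝[≠] 0) := by
    refine tendsto_nhdsWithin_of_tendsto_nhds_of_eventually_within _ ?_ ?_
    · have hcont : Continuous fun z => 1 - β * z := by fun_prop
      simpa [mul_inv_cancel₀ hβ] using (hcont.tendsto β⁻¹).mono_left nhdsWithin_le_nhds
    · filter_upwards [self_mem_nhdsWithin] with z hz
      rw [Set.mem_compl_singleton_iff, sub_ne_zero]
      exact fun h => hz (eq_inv_of_mul_eq_one_right h.symm)
  exact tendsto_norm_cobounded_atTop.comp (tendsto_inv₀_nhdsNE_zero.comp hzero)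

theorem tendsto_norm_sum_inv_one_sub_mul_atTop {A : Finset 𝕜} {β : 𝕜} (hβA : β ∈ A)
    (hβ : β ≠ 0) : Tendsto (fun z => ‖∑ α ∈ A, (1 - α * z)⁻¹‖) (𝓝[≠] β⁻¹) atTop := by
  classical
  set rest : 𝕜 → 𝕜 := fun z => ∑ α ∈ A.erase β, (1 - α * z)⁻¹
  have hrest : ContinuousAt rest β⁻¹ := by
    refine tendsto_finsetSum _ fun α hα => ?_
    have hne : 1 - α * β⁻¹ ≠ 0 := by
      rw [sub_ne_zero, ne_comm, ← div_eq_mul_inv, ne_eq, div_eq_one_iff_eq hβ]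
      exact Finset.ne_of_mem_erase hα
    exact (continuousAt_const.sub (continuousAt_const.mul continuousAt_id)).inv₀ hne
  refine tendsto_atTop_mono (fun z => ?_) ((tendsto_norm_inv_one_sub_mul_atTop hβ).atTop_add
    (hrest.norm.mono_left nhdsWithin_le_nhds).neg)
  rw [← Finset.add_sum_erase A _ hβA]
  exact norm_sub_le_norm_add ((1 - β * z)⁻¹) (rest z)

end GeneratingFunction

theorem tendsto_smul_nhdsLT_one {E : Type*} [NormedAddCommGroup E] [NormedSpace ℝ E] {w : E}
    (hw : w ≠ 0) : Tendsto (fun t : ℝ => t • w) (𝓝[<] 1) (𝓝[≠] w) := by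
  refine tendsto_nhdsWithin_of_tendsto_nhds_of_eventually_within _ ?_ ?_
  · have hcont : Continuous fun t : ℝ => t • w := by fun_prop
    simpa using (hcont.tendsto 1).mono_left nhdsWithin_le_nhds
  · filter_upwards [self_mem_nhdsWithin] with t (ht : t < 1) htw
    exact ht.ne (smul_left_injective ℝ hw (htw.trans (one_smul ℝ w).symm))

/-- If the power series `Σ_s (Σ_{α ∈ A} α^s) z^s` has radius of convergence greater
than `1/M` (expressed by absolute convergence at some `ρ > 1/M`), then every element
of the finite set `A ⊆ ℂ` has modulus less than `M`. -/
theorem abs_lt_of_radius_gt (A : Finset ℂ) (M : ℝ) (hM : 0 < M)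
    (h : ∃ ρ : ℝ, 1 / M < ρ ∧
      Summable fun s : ℕ => ‖∑ α ∈ A, α ^ s‖ * ρ ^ s) :
    ∀ α ∈ A, ‖α‖ < M := by
  intro α hα
  by_contra! hαM
  obtain ⟨β, hβA, hβmax⟩ := A.exists_max_image norm ⟨α, hα⟩
  have hβM : M ≤ ‖β‖ := hαM.trans (hβmax α hα)
  have hβ : β ≠ 0 := norm_pos_iff.mp (hM.trans_le hβM)
  obtain ⟨ρ, hρ, hsum⟩ := h
  have hbounded : ∀ᶠ t : ℝ in 𝓝[<] 1,
      ‖∑ γ ∈ A, (1 - γ * (t • β⁻¹))⁻¹‖ ≤ ∑' s, ‖∑ α ∈ A, α ^ s‖ * ρ ^ s := by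
    filter_upwards [Ioo_mem_nhdsLT zero_lt_one] with t ⟨ht0, ht1⟩
    have hz : ‖t • β⁻¹‖ < ‖β‖⁻¹ := by
      rw [norm_smul, norm_inv, Real.norm_of_nonneg ht0.le]
      exact mul_lt_of_lt_one_left (by positivity) ht1
    have hinside : ∀ γ ∈ A, ‖γ * (t • β⁻¹)‖ < 1 := fun γ hγ =>
      calc ‖γ * (t • β⁻¹)‖ ≤ ‖β‖ * ‖t • β⁻¹‖ := by rw [norm_mul]; gcongr; exact hβmax γ hγ
        _ < ‖β‖ * ‖β‖⁻¹ := by gcongr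
        _ = 1 := mul_inv_cancel₀ (norm_ne_zero_iff.mpr hβ)
    refine (hasSum_powerSum_mul_pow A hinside).norm_le_tsum_norm_mul_pow ?_ hsum
    calc ‖t • β⁻¹‖ ≤ ‖β‖⁻¹ := hz.le
      _ ≤ 1 / M := by rw [one_div]; gcongr
      _ ≤ ρ := hρ.le
  obtain ⟨t, hle, hgt⟩ := (hbounded.and (((tendsto_norm_sum_inv_one_sub_mul_atTop hβA hβ).comp
    (tendsto_smul_nhdsLT_one (inv_ne_zero hβ))).eventually_gt_atTop _)).exists
  exact hle.not_gt hgt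
end

section
/- Let q be a prime power, d ≤ q + 1 a positive integer, and X a hypersurface of degree d and dimension n in P^{n+1} over F_q. Then |X(F_q)| ≤ d·q^n + π_{n−1}, where π_{n−1} = q^{n−1} + ... + q + 1 (Serre's inequality). Equivalently, |X(F_q)| ≤ d·π_n − (d−1)·π_{2n−N} with N = n + 1, i.e., |X(F_q)| ≤ d(π_n − π_{n−1}) + π_{n−1}. -/
/-!
Count the zeros of `f` in `F^{n+2}` (the affine cone over `X`) and divide by `q - 1`.
The cone bound `(d(q - 1) + 1) q^m` in `m + 2` variables is proved by induction on the number
of variables. If `f` has a nonzero zero, a linear change of coordinates moves it to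
`e₀ = (1, 0, …, 0)`; then the coefficient of `X₀^d` is `f(e₀) = 0`, so as a polynomial in
`X₀` over the remaining variables `f` has degree `j < d ≤ q + 1`, with leading coefficient `h`
homogeneous of degree `d - j`. A fibre over a zero of `h` has at most `q` points and any other
fibre at most `j`, so `N(f) ≤ q^{m+1} j + (q - j) N(h)`, and induction on `h` closes the step.
-/

open Finset
open scoped Matrix LinearAlgebra.Projectivization

section Field

variable {K : Type*} [Field K]

theorem exists_linearEquiv_apply_eq {V : Type*} [AddCommGroup V] [Module K V]
    [FiniteDimensional K V] {u v : V} (hu : u ≠ 0) (hv : v ≠ 0) :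
    ∃ e : V ≃ₗ[K] V, e u = v := by
  obtain ⟨e, he⟩ := Submodule.exists_linearEquiv_restrict_eq
    ((LinearEquiv.toSpanNonzeroSingleton K V u hu).symm ≪≫ₗ
      LinearEquiv.toSpanNonzeroSingleton K V v hv)
  refine ⟨e, ?_⟩
  simpa [LinearEquiv.coord_self] using (he ⟨u, Submodule.mem_span_singleton_self u⟩).symm

theorem Polynomial.card_zeros_le_natDegree {p : Polynomial K} (hp : p ≠ 0) :
    Nat.card {t : K // p.eval t = 0} ≤ p.natDegree := by
  classical
  calc Nat.card {t : K // p.eval t = 0} = Nat.card p.roots.toFinset :=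
        Nat.card_congr (Equiv.subtypeEquivRight fun t => by simp [hp])
    _ = p.roots.toFinset.card := Nat.card_eq_finsetCard _
    _ ≤ p.roots.card := Multiset.toFinset_card_le _
    _ ≤ p.natDegree := Polynomial.card_roots' p

end Field

namespace Projectivization

variable {k V : Type*} [DivisionRing k] [AddCommGroup V] [Module k V]

theorem card_subtype_eq_card_subtype_rep_mul_add_one [Finite V] {P : V → Prop}
    (hP : ∀ (c : kˣ) (v : V), P (c • v) ↔ P v) (h0 : P 0) :
    Nat.card {v : V // P v} = Nat.card {x : ℙ k V // P x.rep} * Nat.card kˣ + 1 := by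
  have hcone :
      Nat.card {v : V // v ≠ 0 ∧ P v} = Nat.card {x : ℙ k V // P x.rep} * Nat.card kˣ := by
    rw [← Nat.card_prod]
    refine Nat.card_congr <| (Equiv.subtypeSubtypeEquivSubtypeInter (· ≠ 0) P).symm.trans <|
      ((nonZeroEquivProjectivizationProdUnits k V).subtypeEquiv (q := fun p => P p.1.rep)
        fun v => ?_).trans (Equiv.prodSubtypeFstEquivSubtypeProd (p := fun x : ℙ k V => P x.rep))
    obtain ⟨c, hc⟩ := exists_smul_eq_mk_rep k v.1 v.2
    change P v ↔ P (mk k v.1 v.2).rep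
    rw [← hc, hP]
  rw [← hcone]
  exact (Set.ncard_sdiff_singleton_add_one (s := {v | P v}) h0).symm.trans
    (congrArg (· + 1) (Nat.card_congr (Equiv.subtypeEquivRight fun v => by simp [and_comm])))

end Projectivization

theorem cone_bound_step {q j e m N M : ℕ} (hq : 1 ≤ q) (hjq : j ≤ q) (he : 1 ≤ e)
    (hN : N ≤ q ^ m * j + (q - j) * M) (hM : M * q ^ 2 ≤ (e * (q - 1) + 1) * q ^ m) :
    N * q ^ 2 ≤ ((j + e) * (q - 1) + 1) * q ^ (m + 1) := by
  have hM' : (q - j) * M * q ^ 2 ≤ (q - j) * ((e * (q - 1) + 1) * q ^ m) := by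
    rw [mul_assoc]; exact Nat.mul_le_mul_left _ hM
  have hN' := Nat.mul_le_mul_right (q ^ 2) hN
  zify [hq, hjq] at hM' hN' ⊢
  have hslack : 0 ≤ (j : ℤ) * (e - 1) * (q - 1) * q ^ m := by
    have he' : (0 : ℤ) ≤ e - 1 := by omega
    have hq' : (0 : ℤ) ≤ q - 1 := by omega
    positivity
  linear_combination hN' + hM' + hslack

namespace MvPolynomial

section Homogeneous

variable {R σ : Type*} [CommSemiring R] {f : MvPolynomial σ R} {d : ℕ}

theorem IsHomogeneous.eval_smul (hf : f.IsHomogeneous d) (c : R) (x : σ → R) :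
    eval (c • x) f = c ^ d * eval x f := by
  rw [eval_eq, eval_eq, Finset.mul_sum]
  refine Finset.sum_congr rfl fun m hm => ?_
  have hdeg : ∑ i ∈ m.support, m i = d := by
    rw [← hf (mem_support_iff.mp hm), Finsupp.weight_apply, Finsupp.sum]
    simp
  simp only [Pi.smul_apply, smul_eq_mul, mul_pow, Finset.prod_mul_distrib,
    Finset.prod_pow_eq_pow_sum, hdeg]
  ring

theorem IsHomogeneous.eval_zero (hf : f.IsHomogeneous d) (hd : d ≠ 0) : eval 0 f = 0 := by
  simpa [zero_pow hd] using hf.eval_smul 0 0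

end Homogeneous

section LinearSubst

variable {R σ : Type*} [CommSemiring R] [Fintype σ]

noncomputable def linearSubst (A : Matrix σ σ R) (i : σ) : MvPolynomial σ R :=
  ∑ j, C (A i j) * X j

theorem eval_bind₁_linearSubst (A : Matrix σ σ R) (x : σ → R) (f : MvPolynomial σ R) :
    eval x (bind₁ (linearSubst A) f) = eval (A *ᵥ x) f := by
  refine (eval₂Hom_bind₁ _ _ _ _).trans (congrArg (eval · f) ?_)
  funext i
  simp [linearSubst, Matrix.mulVec, dotProduct]

theorem bind₁_linearSubst_linearSubst (A B : Matrix σ σ R) (i : σ) :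
    bind₁ (linearSubst B) (linearSubst A i) = linearSubst (A * B) i := by
  simp only [linearSubst, map_sum, map_mul, bind₁_C_right, bind₁_X_right, Finset.mul_sum,
    Matrix.mul_apply, Finset.sum_mul]
  rw [Finset.sum_comm]
  simp only [← mul_assoc, ← C_mul]

theorem linearSubst_one [DecidableEq σ] : linearSubst (1 : Matrix σ σ R) = X := by
  funext i
  simp [linearSubst, Matrix.one_apply]

theorem leftInverse_bind₁_linearSubst [DecidableEq σ] {A B : Matrix σ σ R} (hAB : A * B = 1) :
    Function.LeftInverse (bind₁ (linearSubst B)) (bind₁ (linearSubst A)) := by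
  intro f
  rw [bind₁_bind₁]
  simp_rw [bind₁_linearSubst_linearSubst, hAB, linearSubst_one, bind₁_X_left, AlgHom.id_apply]

theorem IsHomogeneous.bind₁_linearSubst {f : MvPolynomial σ R} {d : ℕ} (hf : f.IsHomogeneous d)
    (A : Matrix σ σ R) : (bind₁ (linearSubst A) f).IsHomogeneous d := by
  have hA : ∀ i, (linearSubst A i).IsHomogeneous 1 := fun i =>
    IsHomogeneous.sum _ _ _ fun j _ => isHomogeneous_C_mul_X _ _
  simpa using hf.aeval _ hA

end LinearSubst

section FinSuccEquiv

variable {R : Type*} [CommRing R] {m d : ℕ} {g : MvPolynomial (Fin (m + 1)) R}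

theorem IsHomogeneous.coeff_finSuccEquiv_eq_C (hg : g.IsHomogeneous d) :
    (finSuccEquiv R m g).coeff d = C (eval (Fin.cons 1 0) g) := by
  set P := finSuccEquiv R m g
  have hdeg : P.natDegree < d + 1 := by
    rw [natDegree_finSuccEquiv]
    exact Nat.lt_succ_of_le ((degreeOf_le_totalDegree g 0).trans hg.totalDegree_le)
  have hlower : ∀ i ∈ range d, eval 0 (P.coeff i) = 0 := fun i hi =>
    (hg.finSuccEquiv_coeff_isHomogeneous i (d - i) (by simp at hi; omega)).eval_zero
      (by simp at hi; omega)
  have htop : eval (Fin.cons 1 0) g = eval 0 (P.coeff d) := by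
    rw [eval_eq_eval_mv_eval', Polynomial.eval_one_map, Polynomial.eval_eq_sum_range' hdeg,
      map_sum, Finset.sum_range_succ, Finset.sum_eq_zero]
    · simp
    · intro i hi
      simpa using hlower i hi
  rw [htop, MvPolynomial.eval_zero, constantCoeff_eq]
  exact totalDegree_eq_zero_iff_eq_C.mp ((totalDegree_zero_iff_isHomogeneous _).mpr
    (hg.finSuccEquiv_coeff_isHomogeneous d 0 (add_zero d)))

theorem IsHomogeneous.natDegree_finSuccEquiv_lt (hg : g.IsHomogeneous d) (hg0 : g ≠ 0)
    (h : eval (Fin.cons 1 0) g = 0) : (finSuccEquiv R m g).natDegree < d := by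
  have hP : finSuccEquiv R m g ≠ 0 := by simpa using hg0
  refine lt_of_le_of_ne ?_ fun hd => Polynomial.leadingCoeff_ne_zero.mpr hP ?_
  · rw [natDegree_finSuccEquiv, ← hg.totalDegree hg0]
    exact degreeOf_le_totalDegree g 0
  · rw [Polynomial.leadingCoeff, hd, hg.coeff_finSuccEquiv_eq_C, h, map_zero]

end FinSuccEquiv

section Count

variable {K σ : Type*} [Field K] [Fintype σ] [DecidableEq σ]

theorem card_zeros_bind₁_linearSubst {A B : Matrix σ σ K} (hAB : A * B = 1)
    (f : MvPolynomial σ K) :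
    Nat.card {x : σ → K // eval x (bind₁ (linearSubst A) f) = 0} =
      Nat.card {x : σ → K // eval x f = 0} := by
  have hBA : B * A = 1 := mul_eq_one_comm.mp hAB
  let e : (σ → K) ≃ (σ → K) :=
    ⟨(A *ᵥ ·), (B *ᵥ ·), fun x => by simp [Matrix.mulVec_mulVec, hBA],
      fun x => by simp [Matrix.mulVec_mulVec, hAB]⟩
  exact Nat.card_congr (e.subtypeEquiv fun x => by simp [e, eval_bind₁_linearSubst])

theorem IsHomogeneous.exists_linearSubst_eval_eq_zero {f : MvPolynomial σ K} {d : ℕ}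
    (hf : f ≠ 0) (hhom : f.IsHomogeneous d) {u v : σ → K} (hu : u ≠ 0) (hv : v ≠ 0)
    (hfv : eval v f = 0) :
    ∃ g : MvPolynomial σ K, g ≠ 0 ∧ g.IsHomogeneous d ∧ eval u g = 0 ∧
      Nat.card {x : σ → K // eval x g = 0} = Nat.card {x : σ → K // eval x f = 0} := by
  obtain ⟨e, he⟩ := exists_linearEquiv_apply_eq (K := K) hu hv
  have hAB :
      LinearMap.toMatrix' e.toLinearMap * LinearMap.toMatrix' e.symm.toLinearMap = 1 := by
    simp [← LinearMap.toMatrix'_comp]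
  refine ⟨_, fun h => hf ?_, hhom.bind₁_linearSubst _, ?_,
    card_zeros_bind₁_linearSubst hAB f⟩
  · rw [← leftInverse_bind₁_linearSubst hAB f, h, map_zero]
  · rw [eval_bind₁_linearSubst, LinearMap.toMatrix'_mulVec, LinearEquiv.coe_coe, he, hfv]

end Count

section Fibres

variable {K : Type*} [Field K] [Fintype K] {m : ℕ}

theorem card_zeros_eq_sum_fibre (g : MvPolynomial (Fin (m + 1)) K) :
    Nat.card {x : Fin (m + 1) → K // eval x g = 0} =
      ∑ s : Fin m → K, Nat.card {t : K // ((finSuccEquiv K m g).map (eval s)).eval t = 0} := by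
  let e : (Fin (m + 1) → K) ≃ (Fin m → K) × K :=
    (Fin.consEquiv fun _ => K).symm.trans (Equiv.prodComm _ _)
  rw [← Nat.card_sigma]
  refine Nat.card_congr ((e.subtypeEquiv fun x => ?_).trans
    (Equiv.subtypeProdEquivSigmaSubtype fun s t =>
      ((finSuccEquiv K m g).map (eval s)).eval t = 0))
  simp [e, Fin.consEquiv, ← eval_eq_eval_mv_eval']

theorem card_zeros_le_fibrewise (g : MvPolynomial (Fin (m + 1)) K)
    (hj : (finSuccEquiv K m g).natDegree ≤ Fintype.card K) :
    Nat.card {x : Fin (m + 1) → K // eval x g = 0} ≤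
      Fintype.card K ^ m * (finSuccEquiv K m g).natDegree +
        (Fintype.card K - (finSuccEquiv K m g).natDegree) *
          Nat.card {s : Fin m → K // eval s (finSuccEquiv K m g).leadingCoeff = 0} := by
  classical
  set P := finSuccEquiv K m g
  set j := P.natDegree
  have hfibre : ∀ s : Fin m → K, Nat.card {t : K // (P.map (eval s)).eval t = 0} ≤
      j + (Fintype.card K - j) * if eval s P.leadingCoeff = 0 then 1 else 0 := by
    intro s
    split_ifs with hs
    · simpa [Nat.add_sub_cancel' hj, Nat.card_eq_fintype_card] using
        Finite.card_subtype_le (fun t : K => (P.map (eval s)).eval t = 0)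
    · have hne : P.map (eval s) ≠ 0 := fun h => hs (by
        simpa [Polynomial.coeff_map] using congrArg (Polynomial.coeff · P.natDegree) h)
      simpa using (Polynomial.card_zeros_le_natDegree hne).trans Polynomial.natDegree_map_le
  rw [card_zeros_eq_sum_fibre]
  refine (Finset.sum_le_sum fun s _ => hfibre s).trans_eq ?_
  rw [Finset.sum_add_distrib, ← Finset.mul_sum, Finset.sum_boole, Nat.card_eq_fintype_card,
    Fintype.card_subtype]
  simp

end Fibres

section Serre

variable {K : Type*} [Field K] [Fintype K]

/-- Stated after multiplying by `q ^ 2`, so that it holds for every number of variables `m`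
(vacuously for `m = 0`), which starts the induction. -/
theorem IsHomogeneous.card_zeros_mul_sq_le {m d : ℕ} {f : MvPolynomial (Fin m) K} (hf : f ≠ 0)
    (hhom : f.IsHomogeneous d) (hd : d ≠ 0) (hdq : d ≤ Fintype.card K + 1) :
    Nat.card {x : Fin m → K // eval x f = 0} * Fintype.card K ^ 2 ≤
      (d * (Fintype.card K - 1) + 1) * Fintype.card K ^ m := by
  have hq : 1 < Fintype.card K := Fintype.one_lt_card
  induction m generalizing d with
  | zero => exact absurd (hhom.inj_right (isHomogeneous_of_isEmpty _ _ f) hf) hd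
  | succ m ih =>
    by_cases hzero : ∃ v, v ≠ 0 ∧ eval v f = 0
    · obtain ⟨v, hv, hfv⟩ := hzero
      have hu : (Fin.cons 1 0 : Fin (m + 1) → K) ≠ 0 := fun h => by simpa using congrFun h 0
      obtain ⟨g, hg0, hghom, hgu, hcard⟩ := hhom.exists_linearSubst_eval_eq_zero hf hu hv hfv
      have hj := hghom.natDegree_finSuccEquiv_lt hg0 hgu
      have hP : finSuccEquiv K m g ≠ 0 := by simpa using hg0
      have hlead := ih (Polynomial.leadingCoeff_ne_zero.mpr hP)
        (hghom.finSuccEquiv_coeff_isHomogeneous _ (d - (finSuccEquiv K m g).natDegree) (by omega))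
        (by omega) (by omega)
      rw [← hcard]
      simpa [Nat.add_sub_cancel' hj.le] using
        cone_bound_step hq.le (by omega) (by omega) (card_zeros_le_fibrewise g (by omega)) hlead
    · have hzero' (x : {x : Fin (m + 1) → K // eval x f = 0}) : (x : Fin (m + 1) → K) = 0 :=
        by_contra fun h => hzero ⟨x, h, x.2⟩
      have hone : Nat.card {x : Fin (m + 1) → K // eval x f = 0} ≤ 1 :=
        Finite.card_le_one_iff_subsingleton.mpr
          ⟨fun x y => Subtype.ext ((hzero' x).trans (hzero' y).symm)⟩
      calc Nat.card {x : Fin (m + 1) → K // eval x f = 0} * Fintype.card K ^ 2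
          ≤ 1 * (Fintype.card K * Fintype.card K) := by rw [sq]; exact Nat.mul_le_mul_right _ hone
        _ ≤ (d * (Fintype.card K - 1) + 1) * Fintype.card K ^ (m + 1) := by
          rw [one_mul]
          refine Nat.mul_le_mul ?_ (Nat.le_self_pow (by omega) _)
          have := Nat.mul_le_mul_right (Fintype.card K - 1) (Nat.one_le_iff_ne_zero.mpr hd)
          omega

end Serre

end MvPolynomial

/-- Serre's inequality: a hypersurface of degree `d ≤ q + 1` and dimension `n` in
`ℙ^{n+1}` over a finite field `F` with `q` elements has at most `d·q^n + π_{n−1}`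
rational points, where `π_{n−1} = 1 + q + ⋯ + q^{n−1}`. -/
theorem serre_inequality {F : Type*} [Field F] [Fintype F] (n d : ℕ)
    (f : MvPolynomial (Fin (n + 2)) F) (hf : f ≠ 0)
    (hhom : f.IsHomogeneous d) (hd : 1 ≤ d) (hdq : d ≤ Fintype.card F + 1) :
    Set.ncard {x : Projectivization F (Fin (n + 2) → F) |
        MvPolynomial.eval x.rep f = 0}
      ≤ d * (Fintype.card F) ^ n + ∑ i ∈ Finset.range n, (Fintype.card F) ^ i := by
  have hq : 1 < Fintype.card F := Fintype.one_lt_card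
  have hcone := Projectivization.card_subtype_eq_card_subtype_rep_mul_add_one (k := F)
    (P := fun v : Fin (n + 2) → F => MvPolynomial.eval v f = 0)
    (fun c v => by simp [Units.smul_def, hhom.eval_smul]) (hhom.eval_zero (by omega))
  have haffine := hhom.card_zeros_mul_sq_le hf (by omega) hdq
  rw [hcone, Nat.card_units, Nat.card_eq_fintype_card (α := F), pow_add, ← mul_assoc] at haffine
  have hproj := Nat.le_of_mul_le_mul_right haffine (by positivity)
  have hgeom := geom_sum_mul_add (Fintype.card F - 1) n
  rw [Nat.sub_add_cancel hq.le] at hgeom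
  refine Nat.le_of_mul_le_mul_right (c := Fintype.card F - 1) ?_ (by omega)
  rw [← Nat.card_coe_set_eq, Set.coe_ofPred]
  nlinarith
end
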